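/- arXiv:2010.01261 — 2 statements merged into one kernel-verified Lean document; each statement's English description precedes it below -/
import Mathlib

section
/- Let A = (A_{ij}) ∈ Mat_n(ℂ), let C₁,…,C_n denote the columns of A, and fix 1 ≤ k ≤ n. Let H_k := span{C_i : i ≠ k}, let u be the k-th row of A with its k-th entry removed, v the k-th column C_k with its k-th entry removed, and B the (n−1)×(n−1) submatrix of A formed by removing the k-th row and k-th column. If B is invertible, then dist(C_k, H_k) ≥ |A_{kk} − uB^{−1}v| / √(1 + ‖uB^{−1}‖²). -/
/-!
Put `x := u B⁻¹` and let `w` be the vector with `w_k = 1` and `-x̄` in the other coordinates, so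
that `⟪w, z⟫ = z_k - x ⬝ᵥ z'` where `z'` is `z` with its `k`-th entry removed. Since `x B = u`,
`w` is orthogonal to every column `C_i` with `i ≠ k`, hence to `H_k`, while
`⟪w, C_k⟫ = A_kk - u B⁻¹ v`. For `y ∈ H_k`, Cauchy–Schwarz applied to `⟪w, C_k - y⟫` gives
`|A_kk - u B⁻¹ v| ≤ ‖w‖ ‖C_k - y‖`, and `‖w‖² = 1 + ‖u B⁻¹‖²`.
-/

open Matrix Metric InnerProductSpace

section

variable {𝕜 E : Type*} [RCLike 𝕜] [NormedAddCommGroup E] [InnerProductSpace 𝕜 E]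

theorem norm_inner_div_norm_le_infDist {K : Submodule 𝕜 E} {w : E} (hw : w ∈ Kᗮ) (x : E) :
    ‖⟪w, x⟫_𝕜‖ / ‖w‖ ≤ infDist x K := by
  refine (le_infDist ⟨0, K.zero_mem⟩).mpr fun y hy => ?_
  have hxy : ⟪w, x⟫_𝕜 = ⟪w, x - y⟫_𝕜 := by
    rw [inner_sub_right, (K.mem_orthogonal' w).mp hw y hy, sub_zero]
  rw [hxy, dist_eq_norm]
  exact div_le_of_le_mul₀ (norm_nonneg _) (norm_nonneg _)
    ((norm_inner_le_norm w _).trans_eq (mul_comm _ _))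

theorem mem_orthogonal_span_of_inner_eq_zero {S : Set E} {w : E} (h : ∀ s ∈ S, ⟪w, s⟫_𝕜 = 0) :
    w ∈ (Submodule.span 𝕜 S)ᗮ := by
  have : Submodule.span 𝕜 {w} ⟂ Submodule.span 𝕜 S := Submodule.isOrtho_span.mpr (by simpa)
  exact Submodule.isOrtho_iff_le.mp this (Submodule.mem_span_singleton_self w)

end

section

variable {𝕜 ι : Type*} [RCLike 𝕜] [Fintype ι] [DecidableEq ι]

noncomputable def hyperplaneNormal (k : ι) (x : {j // j ≠ k} → 𝕜) : EuclideanSpace 𝕜 ι :=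
  WithLp.toLp 2 fun i => if h : i = k then 1 else -star (x ⟨i, h⟩)

theorem inner_hyperplaneNormal (k : ι) (x : {j // j ≠ k} → 𝕜) (z : EuclideanSpace 𝕜 ι) :
    ⟪hyperplaneNormal k x, z⟫_𝕜 = z k - x ⬝ᵥ fun j => z j := by
  rw [PiLp.inner_apply, Fintype.sum_eq_add_sum_subtype_ne _ k]
  have hne (j : {j // j ≠ k}) : (j : ι) ≠ k := j.2
  simp [hyperplaneNormal, dotProduct, sub_eq_add_neg, hne, mul_comm]

theorem norm_hyperplaneNormal (k : ι) (x : {j // j ≠ k} → 𝕜) :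
    ‖hyperplaneNormal k x‖ = √(1 + ‖WithLp.toLp 2 x‖ ^ 2) := by
  rw [EuclideanSpace.norm_eq, EuclideanSpace.norm_eq, Real.sq_sqrt (by positivity),
    Fintype.sum_eq_add_sum_subtype_ne _ k]
  have hne (j : {j // j ≠ k}) : (j : ι) ≠ k := j.2
  simp [hyperplaneNormal, hne]

end

/-- **Distance problem via bilinear forms** (Lemma 4.14). Let `C₁,…,C_n` be the columns of
`A`, fix `k`, let `H_k` be the span of the other columns, let `u` be the `k`-th row of `A`
with its `k`-th entry removed, `v` the `k`-th column of `A` with its `k`-th entry removed,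
and `B` the submatrix of `A` obtained by removing the `k`-th row and column. If `B` is
invertible, then `dist(C_k, H_k) ≥ |A_{kk} - u B⁻¹ v| / √(1 + ‖u B⁻¹‖²)`. -/
theorem dist_ge_bilinear_form {n : ℕ} (A : Matrix (Fin n) (Fin n) ℂ) (k : Fin n)
    (B : Matrix {j : Fin n // j ≠ k} {j : Fin n // j ≠ k} ℂ)
    (hB : ∀ i j : {j : Fin n // j ≠ k}, B i j = A i.1 j.1)
    (hBunit : IsUnit B)
    (u v : {j : Fin n // j ≠ k} → ℂ)
    (hu : ∀ j : {j : Fin n // j ≠ k}, u j = A k j.1)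
    (hv : ∀ j : {j : Fin n // j ≠ k}, v j = A j.1 k) :
    Metric.infDist
        ((WithLp.equiv 2 (Fin n → ℂ)).symm (fun i => A i k))
        (Submodule.span ℂ
          {w | ∃ i, i ≠ k ∧ w = (WithLp.equiv 2 (Fin n → ℂ)).symm (fun i' => A i' i)} :
            Set (EuclideanSpace ℂ (Fin n))) ≥
      ‖A k k - (Matrix.vecMul u B⁻¹) ⬝ᵥ v‖ /
        Real.sqrt (1 + ‖(WithLp.equiv 2 ({j : Fin n // j ≠ k} → ℂ)).symm
            (Matrix.vecMul u B⁻¹)‖ ^ 2) := by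
  set x := vecMul u B⁻¹
  have hxB : vecMul x B = u := by
    rw [vecMul_vecMul, nonsing_inv_mul B ((isUnit_iff_isUnit_det B).mp hBunit), vecMul_one]
  have hortho : hyperplaneNormal k x ∈ (Submodule.span ℂ
      {w | ∃ i, i ≠ k ∧ w = (WithLp.equiv 2 (Fin n → ℂ)).symm (fun i' => A i' i)})ᗮ := by
    refine mem_orthogonal_span_of_inner_eq_zero ?_
    rintro _ ⟨i, hik, rfl⟩
    have hxBi := congrFun hxB ⟨i, hik⟩
    simp only [vecMul, hB, hu] at hxBi
    simp [inner_hyperplaneNormal, hxBi]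
  have hcol :
      ⟪hyperplaneNormal k x, (WithLp.equiv 2 (Fin n → ℂ)).symm (fun i => A i k)⟫_ℂ =
        A k k - x ⬝ᵥ v := by
    simp [inner_hyperplaneNormal, dotProduct, hv]
  have hdist := norm_inner_div_norm_le_infDist hortho
    ((WithLp.equiv 2 (Fin n → ℂ)).symm (fun i => A i k))
  rwa [hcol, norm_hyperplaneNormal] at hdist
end

section
/- Let M ∈ Mat_n(ℂ) be deterministic, and let x = (x_i)_{i=1}^n, y = (y_i)_{i=1}^n be random vectors in ℂⁿ such that {(x_i, y_i) : 1 ≤ i ≤ n} is a collection of independent random tuples. Let (x′, y′) be an independent copy of (x, y). Then for every subset π ⊆ [n] and every t ≥ 0, there exists a random variable z₀ whose value is determined by M_{π^c×π^c}, x_{π^c}, y_{π^c}, x′_{π^c}, y′_{π^c} such that sup_{z ∈ ℂ} P( |xᵀMy − z| ≤ t )² ≤ P( |x_πᵀ M_{π×π^c}(y_{π^c} − y′_{π^c}) + (x_{π^c} − x′_{π^c})ᵀ M_{π^c×π} y_π + z₀| ≤ 2t ). -/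
/-!
Split the coordinates into `A = (x, y)_π` and `B = (x, y)_{πᶜ}`, and let `B'` be the same block
of the independent copy. Given `A = a`, the events `(a, B) ∈ E` and `(a, B') ∈ E` are independent
with the same probability `g a`, so by Cauchy–Schwarz
`P((A, B) ∈ E)² = (𝔼 g(A))² ≤ 𝔼 g(A)² = P((A, B) ∈ E ∧ (A, B') ∈ E)`.
For `E = {|xᵀMy - z| ≤ t}` the triangle inequality bounds the difference of the two bilinear forms
by `2t` on the intersection, and that difference is the decoupled expression with
`z₀ = x_{πᶜ}ᵀ M y_{πᶜ} - x'_{πᶜ}ᵀ M y'_{πᶜ}`.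
-/

open MeasureTheory ProbabilityTheory Matrix
open scoped BigOperators ENNReal

namespace Finset

variable {ι α : Type*} [DecidableEq ι]

theorem comp_piecewise {β : Type*} (s : Finset ι) (h : α → β) (f g : ι → α) :
    h ∘ s.piecewise f g = s.piecewise (h ∘ f) (h ∘ g) := by
  ext i
  by_cases hi : i ∈ s <;> simp [hi]

variable [Fintype ι]

theorem sum_sum_eq_sum_sum_ite {R : Type*} [AddCommMonoid R] (t u : Finset ι)
    (f : ι → ι → R) :
    ∑ i ∈ t, ∑ j ∈ u, f i j = ∑ i, ∑ j, if i ∈ t ∧ j ∈ u then f i j else 0 := by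
  rw [← sum_product', ← sum_product', univ_product_univ, ← sum_filter]
  congr 1
  ext
  simp

def glueCompl (s : Finset ι) (p : (s → α) × ((sᶜ : Finset ι) → α)) : ι → α :=
  fun i => if h : i ∈ s then p.1 ⟨i, h⟩ else p.2 ⟨i, mem_compl.2 h⟩

theorem glueCompl_restrict (s : Finset ι) (f g : ι → α) :
    s.glueCompl (s.restrict f, sᶜ.restrict g) = s.piecewise f g := by
  ext i
  by_cases h : i ∈ s <;> simp [glueCompl, h]

theorem measurable_glueCompl [MeasurableSpace α] (s : Finset ι) :
    Measurable (s.glueCompl (α := α)) := by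
  refine measurable_pi_lambda _ fun i => ?_
  by_cases h : i ∈ s
  · simp only [glueCompl, dif_pos h]
    fun_prop
  · simp only [glueCompl, dif_neg h]
    fun_prop

end Finset

theorem Matrix.dotProduct_mulVec_sub_piecewise {ι R : Type*} [Fintype ι] [DecidableEq ι]
    [CommRing R] (M : Matrix ι ι R) (s : Finset ι) (x y x' y' : ι → R) :
    x ⬝ᵥ M *ᵥ y - s.piecewise x x' ⬝ᵥ M *ᵥ s.piecewise y y' =
      (∑ i ∈ s, ∑ j ∈ sᶜ, x i * M i j * (y j - y' j)) +
        (∑ i ∈ sᶜ, ∑ j ∈ s, (x i - x' i) * M i j * y j) +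
        (s.piecewise 0 x ⬝ᵥ M *ᵥ s.piecewise 0 y - s.piecewise 0 x' ⬝ᵥ M *ᵥ s.piecewise 0 y') := by
  rw [Finset.sum_sum_eq_sum_sum_ite s sᶜ, Finset.sum_sum_eq_sum_sum_ite sᶜ s]
  simp only [dotProduct, mulVec, Finset.mul_sum, ← Finset.sum_sub_distrib,
    ← Finset.sum_add_distrib]
  refine Finset.sum_congr rfl fun i _ => Finset.sum_congr rfl fun j _ => ?_
  by_cases hi : i ∈ s <;> by_cases hj : j ∈ s <;> simp [hi, hj] <;> ring

namespace MeasureTheory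

theorem sq_lintegral_le_lintegral_sq {α : Type*} [MeasurableSpace α] (μ : Measure α)
    [IsProbabilityMeasure μ] {g : α → ℝ≥0∞} (hg : AEMeasurable g μ) :
    (∫⁻ a, g a ∂μ) ^ 2 ≤ ∫⁻ a, g a ^ 2 ∂μ := by
  have h := ENNReal.lintegral_mul_le_Lp_mul_Lq μ Real.HolderConjugate.two_two hg
    aemeasurable_const (g := fun _ => 1)
  simp only [Pi.mul_apply, mul_one, ENNReal.one_rpow, lintegral_const, measure_univ] at h
  calc (∫⁻ a, g a ∂μ) ^ 2 ≤ ((∫⁻ a, g a ^ 2 ∂μ) ^ (1 / 2 : ℝ)) ^ 2 := by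
        gcongr
        simpa using h
    _ = ∫⁻ a, g a ^ 2 ∂μ := by
      rw [← ENNReal.rpow_natCast, ← ENNReal.rpow_mul]
      norm_num

variable {β γ : Type*} [MeasurableSpace β] [MeasurableSpace γ]

theorem _root_.MeasurableSet.setOf_mem_and_mem {E : Set (β × γ)} (hE : MeasurableSet E) :
    MeasurableSet {p : β × γ × γ | (p.1, p.2.1) ∈ E ∧ (p.1, p.2.2) ∈ E} :=
  (hE.preimage (measurable_fst.prodMk measurable_snd.fst)).inter
    (hE.preimage (measurable_fst.prodMk measurable_snd.snd))

theorem Measure.prod_apply_sq_le (μ : Measure β) (ν : Measure γ) [IsProbabilityMeasure μ]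
    [SFinite ν] {E : Set (β × γ)} (hE : MeasurableSet E) :
    μ.prod ν E ^ 2 ≤ μ.prod (ν.prod ν) {p | (p.1, p.2.1) ∈ E ∧ (p.1, p.2.2) ∈ E} := by
  rw [Measure.prod_apply hE, Measure.prod_apply hE.setOf_mem_and_mem]
  calc _ ≤ ∫⁻ a, ν (Prod.mk a ⁻¹' E) ^ 2 ∂μ :=
        sq_lintegral_le_lintegral_sq μ (measurable_measure_prodMk_left hE).aemeasurable
    _ = _ := by
      refine lintegral_congr fun a => ?_
      rw [sq, ← Measure.prod_prod]
      rfl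

end MeasureTheory

namespace ProbabilityTheory

variable {Ω β γ : Type*} [MeasurableSpace Ω] [MeasurableSpace β] [MeasurableSpace γ]
  {μ : Measure Ω} [IsProbabilityMeasure μ] {A : Ω → β} {B B' : Ω → γ}

theorem IndepFun.map_prodMk_prodMk_eq (hA : AEMeasurable A μ) (hB : AEMeasurable B μ)
    (hB' : AEMeasurable B' μ) (hAB : IndepFun A B μ)
    (hABB' : IndepFun (fun ω => (A ω, B ω)) B' μ) (hBB' : IdentDistrib B B' μ μ) :
    μ.map (fun ω => (A ω, (B ω, B' ω))) = (μ.map A).prod ((μ.map B).prod (μ.map B)) := by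
  have hlaw : μ.map (fun ω => ((A ω, B ω), B' ω)) =
      ((μ.map A).prod (μ.map B)).prod (μ.map B) := by
    rw [(indepFun_iff_map_prod_eq_prod_map_map (hA.prodMk hB) hB').1 hABB',
      (indepFun_iff_map_prod_eq_prod_map_map hA hB).1 hAB, hBB'.map_eq]
  rw [← Measure.prodAssoc_prod, ← hlaw, AEMeasurable.map_map_of_aemeasurable
    MeasurableEquiv.prodAssoc.measurable.aemeasurable ((hA.prodMk hB).prodMk hB')]
  rfl

theorem IndepFun.measure_sq_le_measure_and (hA : AEMeasurable A μ) (hB : AEMeasurable B μ)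
    (hB' : AEMeasurable B' μ) (hAB : IndepFun A B μ)
    (hABB' : IndepFun (fun ω => (A ω, B ω)) B' μ) (hBB' : IdentDistrib B B' μ μ)
    {E : Set (β × γ)} (hE : MeasurableSet E) :
    μ {ω | (A ω, B ω) ∈ E} ^ 2 ≤ μ {ω | (A ω, B ω) ∈ E ∧ (A ω, B' ω) ∈ E} := by
  have := Measure.isProbabilityMeasure_map hA
  have hL : μ {ω | (A ω, B ω) ∈ E} = (μ.map A).prod (μ.map B) E := by
    rw [← (indepFun_iff_map_prod_eq_prod_map_map hA hB).1 hAB,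
      Measure.map_apply_of_aemeasurable (hA.prodMk hB) hE]
    rfl
  have hR : μ {ω | (A ω, B ω) ∈ E ∧ (A ω, B' ω) ∈ E} =
      (μ.map A).prod ((μ.map B).prod (μ.map B)) {p | (p.1, p.2.1) ∈ E ∧ (p.1, p.2.2) ∈ E} := by
    rw [← hAB.map_prodMk_prodMk_eq hA hB hB' hABB' hBB',
      Measure.map_apply_of_aemeasurable (hA.prodMk (hB.prodMk hB'))
        hE.setOf_mem_and_mem]
    rfl
  rw [hL, hR]
  exact Measure.prod_apply_sq_le _ _ hE

theorem measure_sq_le_measure_and_piecewise {ι α : Type*} [Fintype ι] [DecidableEq ι]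
    [MeasurableSpace α] {w w' : Ω → ι → α} (hw : iIndepFun (fun i ω => w ω i) μ)
    (hww' : IndepFun w w' μ) (hid : IdentDistrib w w' μ μ) (s : Finset ι)
    {S : Set (ι → α)} (hS : MeasurableSet S) :
    μ {ω | w ω ∈ S} ^ 2 ≤ μ {ω | w ω ∈ S ∧ s.piecewise (w ω) (w' ω) ∈ S} := by
  have hrestrict (t : Finset ι) : Measurable (t.restrict (π := fun _ => α)) :=
    t.measurable_restrict
  have key := IndepFun.measure_sq_le_measure_and
    (A := fun ω => s.restrict (w ω)) (B := fun ω => sᶜ.restrict (w ω))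
    (B' := fun ω => sᶜ.restrict (w' ω))
    ((hrestrict s).comp_aemeasurable hid.aemeasurable_fst)
    ((hrestrict sᶜ).comp_aemeasurable hid.aemeasurable_fst)
    ((hrestrict sᶜ).comp_aemeasurable hid.aemeasurable_snd)
    (hw.indepFun_finset₀ s sᶜ disjoint_compl_right fun i =>
      (measurable_pi_apply i).comp_aemeasurable hid.aemeasurable_fst)
    (hww'.comp ((hrestrict s).prodMk (hrestrict sᶜ)) (hrestrict sᶜ))
    (hid.comp (hrestrict sᶜ))
    (s.measurable_glueCompl hS)
  simpa only [Set.mem_preimage, Finset.glueCompl_restrict, Finset.piecewise_same] using key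

end ProbabilityTheory

theorem decoupling_lemma_general {Ω : Type*} [MeasureSpace Ω]
    (hprob : IsProbabilityMeasure (ℙ : Measure Ω))
    {n : ℕ} (M : Matrix (Fin n) (Fin n) ℂ)
    (x y x' y' : Ω → Fin n → ℂ)
    (hindep : iIndepFun (fun i => fun ω => (x ω i, y ω i)) ℙ)
    (hcopy_indep : IndepFun (fun ω => (x ω, y ω)) (fun ω => (x' ω, y' ω)) ℙ)
    (hcopy_dist : IdentDistrib (fun ω => (x ω, y ω)) (fun ω => (x' ω, y' ω)) ℙ ℙ) :
    ∀ (π : Finset (Fin n)) (t : ℝ), 0 ≤ t →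
      ∃ F : (Fin n → ℂ) → (Fin n → ℂ) → (Fin n → ℂ) → (Fin n → ℂ) → ℂ,
        ∀ z : ℂ,
          (ℙ {ω | ‖(x ω) ⬝ᵥ (M.mulVec (y ω)) - z‖ ≤ t}).toReal ^ 2 ≤
            (ℙ {ω |
              ‖(∑ i ∈ π, ∑ j ∈ πᶜ, x ω i * M i j * (y ω j - y' ω j)) +
                (∑ i ∈ πᶜ, ∑ j ∈ π, (x ω i - x' ω i) * M i j * y ω j) +
                F (fun i => if i ∈ π then 0 else x ω i)
                  (fun i => if i ∈ π then 0 else y ω i)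
                  (fun i => if i ∈ π then 0 else x' ω i)
                  (fun i => if i ∈ π then 0 else y' ω i)‖ ≤ 2 * t}).toReal := by
  intro π t _
  refine ⟨fun a b a' b' => a ⬝ᵥ M *ᵥ b - a' ⬝ᵥ M *ᵥ b', fun z => ?_⟩
  let zip : (Fin n → ℂ) × (Fin n → ℂ) → Fin n → ℂ × ℂ := fun p i => (p.1 i, p.2 i)
  have hzip : Measurable zip := by fun_prop
  let S : Set (Fin n → ℂ × ℂ) :=
    {w | ‖(Prod.fst ∘ w) ⬝ᵥ M *ᵥ (Prod.snd ∘ w) - z‖ ≤ t}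
  have hS : MeasurableSet S := measurableSet_le (by fun_prop) measurable_const
  have key := measure_sq_le_measure_and_piecewise hindep (hcopy_indep.comp hzip hzip)
    (hcopy_dist.comp hzip) π hS
  refine ENNReal.toReal_pow _ 2 ▸ ENNReal.toReal_mono (measure_ne_top _ _)
    (key.trans (measure_mono ?_))
  rintro ω ⟨h₁, h₂⟩
  replace h₂ : ‖π.piecewise (x ω) (x' ω) ⬝ᵥ M *ᵥ π.piecewise (y ω) (y' ω) - z‖ ≤ t := by
    simp only [S, Set.mem_ofPred_eq, Finset.comp_piecewise] at h₂
    exact h₂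
  calc _ = ‖(x ω ⬝ᵥ M *ᵥ y ω - z) -
          (π.piecewise (x ω) (x' ω) ⬝ᵥ M *ᵥ π.piecewise (y ω) (y' ω) - z)‖ := by
        rw [sub_sub_sub_cancel_right, dotProduct_mulVec_sub_piecewise]
        rfl
    _ ≤ t + t := (norm_sub_le _ _).trans (add_le_add h₁ h₂)
    _ = 2 * t := (two_mul t).symm

/-- **Decoupling lemma** (Lemma 4.15). For random vectors `x, y` with independent tuples
`(x_i, y_i)` and an independent copy `(x', y')`, for every `π ⊆ [n]` and `t ≥ 0` there is a
quantity `z₀` determined by `M_{πᶜ×πᶜ}`, `x_{πᶜ}`, `y_{πᶜ}`, `x'_{πᶜ}`, `y'_{πᶜ}` such that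
`sup_z P(|xᵀMy - z| ≤ t)² ≤ P(|x_πᵀ M_{π×πᶜ}(y-y')_{πᶜ} + (x-x')_{πᶜ}ᵀ M_{πᶜ×π} y_π + z₀| ≤ 2t)`. -/
theorem decoupling_lemma {Ω : Type*} [MeasureSpace Ω]
    (hprob : IsProbabilityMeasure (ℙ : Measure Ω))
    {n : ℕ} (M : Matrix (Fin n) (Fin n) ℂ)
    (x y x' y' : Ω → Fin n → ℂ)
    (hx : ∀ i, Measurable fun ω => x ω i) (hy : ∀ i, Measurable fun ω => y ω i)
    (hx' : ∀ i, Measurable fun ω => x' ω i) (hy' : ∀ i, Measurable fun ω => y' ω i)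
    (hindep : iIndepFun (fun i => fun ω => (x ω i, y ω i)) ℙ)
    (hcopy_indep : IndepFun (fun ω => (x ω, y ω)) (fun ω => (x' ω, y' ω)) ℙ)
    (hcopy_dist : IdentDistrib (fun ω => (x ω, y ω)) (fun ω => (x' ω, y' ω)) ℙ ℙ) :
    ∀ (π : Finset (Fin n)) (t : ℝ), 0 ≤ t →
      ∃ F : (Fin n → ℂ) → (Fin n → ℂ) → (Fin n → ℂ) → (Fin n → ℂ) → ℂ,
        ∀ z : ℂ,
          (ℙ {ω | ‖(x ω) ⬝ᵥ (M.mulVec (y ω)) - z‖ ≤ t}).toReal ^ 2 ≤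
            (ℙ {ω |
              ‖(∑ i ∈ π, ∑ j ∈ πᶜ, x ω i * M i j * (y ω j - y' ω j)) +
                (∑ i ∈ πᶜ, ∑ j ∈ π, (x ω i - x' ω i) * M i j * y ω j) +
                F (fun i => if i ∈ π then 0 else x ω i)
                  (fun i => if i ∈ π then 0 else y ω i)
                  (fun i => if i ∈ π then 0 else x' ω i)
                  (fun i => if i ∈ π then 0 else y' ω i)‖ ≤ 2 * t}).toReal :=
  decoupling_lemma_general hprob M x y x' y' hindep hcopy_indep hcopy_dist
end
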